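/- arXiv:1810.13418 — 4 statements merged into one kernel-verified Lean document; each statement's English description precedes it below -/
import Mathlib

section
/- Let H be a Hilbert space, K a bounded operator on H, and (Z_p) an increasing family of closed subspaces with orthogonal projections P_p such that K(Z_{p-1}) ⊆ Z_p and K*(Z_{p-1}) ⊆ Z_p for all p ≥ 1. With C := max{‖(I−P₀)K‖, ‖(I−P₀)K*‖}, for every r ≥ 1 and every p ≥ 1 one has ‖(I−P_p)K^r‖ ≤ ‖K^r − K P_{p-1} K^{r-1}‖ ≤ C · ‖(I−P_{p-1})K^{r-1}‖. -/
open ContinuousLinearMap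

/-- The orthogonal projection onto a submodule, as an operator on the ambient space. -/
noncomputable def proj {H : Type*} [NormedAddCommGroup H] [InnerProductSpace ℝ H]
    (Z : Submodule ℝ H) [Z.HasOrthogonalProjection] : H →L[ℝ] H :=
  Z.subtypeL.comp Z.orthogonalProjectionOnto

section OrthogonalProjection

variable {H : Type*} [NormedAddCommGroup H] [InnerProductSpace ℝ H]

theorem one_sub_proj_eq_starProjection_orthogonal (Z : Submodule ℝ H)
    [Z.HasOrthogonalProjection] : 1 - proj Z = Zᗮ.starProjection :=
  (Z.starProjection_orthogonal').symm

theorem one_sub_proj_mul_self (Z : Submodule ℝ H) [Z.HasOrthogonalProjection] :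
    (1 - proj Z) * (1 - proj Z) = 1 - proj Z :=
  Z.isIdempotentElem_starProjection.one_sub.eq

theorem norm_one_sub_proj_comp_le {E : Type*} [NormedAddCommGroup E] [NormedSpace ℝ E]
    (Z : Submodule ℝ H) [Z.HasOrthogonalProjection] (T : E →L[ℝ] H) :
    ‖(1 - proj Z).comp T‖ ≤ ‖T‖ := by
  rw [one_sub_proj_eq_starProjection_orthogonal]
  exact (opNorm_comp_le _ _).trans
    (mul_le_of_le_one_left (norm_nonneg _) Zᗮ.starProjection_norm_le)

theorem one_sub_proj_comp_one_sub_proj_of_le {Y Z : Submodule ℝ H} [Y.HasOrthogonalProjection]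
    [Z.HasOrthogonalProjection] (hYZ : Y ≤ Z) :
    (1 - proj Z).comp (1 - proj Y) = 1 - proj Z := by
  simp only [one_sub_proj_eq_starProjection_orthogonal]
  exact Submodule.starProjection_comp_starProjection_of_le (Submodule.orthogonal_le hYZ)

theorem norm_one_sub_proj_comp_le_of_le {E : Type*} [NormedAddCommGroup E] [NormedSpace ℝ E]
    {Y Z : Submodule ℝ H} [Y.HasOrthogonalProjection] [Z.HasOrthogonalProjection] (hYZ : Y ≤ Z)
    (T : E →L[ℝ] H) : ‖(1 - proj Z).comp T‖ ≤ ‖(1 - proj Y).comp T‖ := by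
  rw [← one_sub_proj_comp_one_sub_proj_of_le hYZ, comp_assoc]
  exact norm_one_sub_proj_comp_le Z _

theorem norm_one_sub_proj_comp_comp_le {Y Z : Submodule ℝ H} [Y.HasOrthogonalProjection]
    [Z.HasOrthogonalProjection] {K : H →L[ℝ] H} (hK : ∀ x ∈ Y, K x ∈ Z) (S : H →L[ℝ] H) :
    ‖(1 - proj Z).comp (K.comp S)‖ ≤ ‖K.comp S - (K.comp (proj Y)).comp S‖ := by
  have hkill : (1 - proj Z : H →L[ℝ] H).comp ((K.comp (proj Y)).comp S) = 0 := by
    ext x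
    simp only [comp_apply, sub_apply, zero_apply, sub_eq_zero]
    exact (Submodule.starProjection_eq_self_iff.mpr (hK _ (Y.starProjection_apply_mem _))).symm
  calc _
      = ‖(1 - proj Z : H →L[ℝ] H).comp (K.comp S - (K.comp (proj Y)).comp S)‖ := by
        rw [comp_sub, hkill, sub_zero]
    _ ≤ ‖K.comp S - (K.comp (proj Y)).comp S‖ := norm_one_sub_proj_comp_le Z _

variable [CompleteSpace H]

theorem isSelfAdjoint_one_sub_proj (Z : Submodule ℝ H) [Z.HasOrthogonalProjection] :
    IsSelfAdjoint (1 - proj Z) := by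
  rw [one_sub_proj_eq_starProjection_orthogonal]
  exact isSelfAdjoint_starProjection _

theorem norm_comp_one_sub_proj (Z : Submodule ℝ H) [Z.HasOrthogonalProjection]
    (K : H →L[ℝ] H) : ‖K.comp (1 - proj Z)‖ = ‖(1 - proj Z).comp (adjoint K)‖ := by
  rw [← LinearIsometryEquiv.norm_map adjoint, adjoint_comp,
    (isSelfAdjoint_one_sub_proj Z).adjoint_eq]

/-- Since `1 - P_Y` is idempotent, `K S - K P_Y S = (K (1 - P_Y)) ((1 - P_Y) S)`, and
`‖K (1 - P_Y)‖ = ‖(1 - P_Y) K*‖` because `1 - P_Y` is self-adjoint. -/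
theorem norm_comp_sub_comp_proj_comp_le (Y : Submodule ℝ H) [Y.HasOrthogonalProjection]
    (K S : H →L[ℝ] H) :
    ‖K.comp S - (K.comp (proj Y)).comp S‖ ≤
      ‖(1 - proj Y).comp (adjoint K)‖ * ‖(1 - proj Y).comp S‖ := by
  have hfactor : K.comp S - (K.comp (proj Y)).comp S = (K.comp (1 - proj Y)).comp
      ((1 - proj Y).comp S) := by
    simp only [← mul_def]
    rw [← mul_assoc, mul_assoc K (1 - proj Y) (1 - proj Y), one_sub_proj_mul_self]
    noncomm_ring
  rw [hfactor, ← norm_comp_one_sub_proj]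
  exact opNorm_comp_le _ _

end OrthogonalProjection

theorem stmt1_general {H : Type*} [NormedAddCommGroup H] [InnerProductSpace ℝ H] [CompleteSpace H]
    (K : H →L[ℝ] H) (Z : ℕ → Submodule ℝ H) [∀ p, (Z p).HasOrthogonalProjection]
    (hmono : Monotone Z)
    (hK : ∀ p : ℕ, 1 ≤ p → ∀ x ∈ Z (p - 1), K x ∈ Z p)
    (C : ℝ)
    (hC : C = max ‖(1 - proj (Z 0)).comp K‖
               ‖(1 - proj (Z 0)).comp (ContinuousLinearMap.adjoint K)‖)
    (r p : ℕ) (hr : 1 ≤ r) (hp : 1 ≤ p) :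
    ‖(1 - proj (Z p)).comp (K ^ r)‖ ≤
        ‖K ^ r - (K.comp (proj (Z (p - 1)))).comp (K ^ (r - 1))‖ ∧
      ‖K ^ r - (K.comp (proj (Z (p - 1)))).comp (K ^ (r - 1))‖ ≤
        C * ‖(1 - proj (Z (p - 1))).comp (K ^ (r - 1))‖ := by
  have hpow : K ^ r = K.comp (K ^ (r - 1)) := by
    rw [← mul_def, ← pow_succ', Nat.sub_add_cancel hr]
  have hadj : ‖(1 - proj (Z (p - 1))).comp (adjoint K)‖ ≤ C :=
    (norm_one_sub_proj_comp_le_of_le (hmono (Nat.zero_le _)) _).trans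
      (hC ▸ le_max_right _ _)
  rw [hpow]
  refine ⟨norm_one_sub_proj_comp_comp_le (hK p hp) _, ?_⟩
  exact (norm_comp_sub_comp_proj_comp_le _ K _).trans
    (mul_le_mul_of_nonneg_right hadj (norm_nonneg _))

theorem stmt1 {H : Type*} [NormedAddCommGroup H] [InnerProductSpace ℝ H] [CompleteSpace H]
    (K : H →L[ℝ] H) (Z : ℕ → Submodule ℝ H) [∀ p, (Z p).HasOrthogonalProjection]
    (hmono : Monotone Z)
    (hK : ∀ p : ℕ, 1 ≤ p → ∀ x ∈ Z (p - 1), K x ∈ Z p)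
    (hKadj : ∀ p : ℕ, 1 ≤ p → ∀ x ∈ Z (p - 1), ContinuousLinearMap.adjoint K x ∈ Z p)
    (C : ℝ)
    (hC : C = max ‖(1 - proj (Z 0)).comp K‖
               ‖(1 - proj (Z 0)).comp (ContinuousLinearMap.adjoint K)‖)
    (r p : ℕ) (hr : 1 ≤ r) (hp : 1 ≤ p) :
    ‖(1 - proj (Z p)).comp (K ^ r)‖ ≤
        ‖K ^ r - (K.comp (proj (Z (p - 1)))).comp (K ^ (r - 1))‖ ∧
      ‖K ^ r - (K.comp (proj (Z (p - 1)))).comp (K ^ (r - 1))‖ ≤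
        C * ‖(1 - proj (Z (p - 1))).comp (K ^ (r - 1))‖ :=
  stmt1_general K Z hmono hK C hC r p hr hp
end

section
/- For every function u ∈ H¹(a,b) with mean value ū := (b−a)⁻¹ ∫ₐᵇ u(x) dx, one has ‖u − ū‖_{L²(a,b)} ≤ ((b−a)/π) ‖u'‖_{L²(a,b)}. -/
/-!
For a function `V` vanishing at `a` and `b` and any `c < π / (b - a)`, the Riccati solution
`ψ x = -c tan (c (x - m))`, `m` the midpoint, is regular on `[a, b]`, and Picone's identity
`V'² - c² V² - (ψ V²)' = (V' - ψ V)²` gives `c² ∫ V² ≤ ∫ V'²`; letting `c → π / (b - a)` gives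
the sharp Dirichlet inequality.

If `v` has mean zero, its primitive `V` vanishes at both ends, so integrating by parts,
`∫ v² = -∫ V v' ≤ (k² ∫ V² + k⁻² ∫ v'²) / 2 ≤ (∫ v² + k⁻² ∫ v'²) / 2` with `k = π / (b - a)`,
the last step being the Dirichlet inequality for `V`.
-/

open MeasureTheory intervalIntegral Real Set Filter Topology

theorem hasDerivAt_neg_mul_tan {c m x : ℝ} (hx : cos (c * (x - m)) ≠ 0) :
    HasDerivAt (fun x => -c * tan (c * (x - m)))
      (-(c ^ 2 + (-c * tan (c * (x - m))) ^ 2)) x := by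
  have hlin : HasDerivAt (fun x => c * (x - m)) c x := by
    simpa using ((hasDerivAt_id x).sub_const m).const_mul c
  refine (((hasDerivAt_tan hx).comp x hlin).const_mul (-c)).congr_deriv ?_
  rw [tan_eq_sin_div_cos]
  field_simp
  linear_combination c ^ 2 * sin_sq_add_cos_sq (c * (x - m))

theorem mul_integral_sq_le_integral_deriv_sq_of_riccati {a b lam : ℝ} (hab : a ≤ b)
    {V V' ψ : ℝ → ℝ} (hV : ∀ x ∈ Icc a b, HasDerivAt V (V' x) x)
    (hV' : ContinuousOn V' (Icc a b)) (hψ : ∀ x ∈ Icc a b, HasDerivAt ψ (-(lam + ψ x ^ 2)) x)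
    (ha : V a = 0) (hb : V b = 0) :
    lam * ∫ x in a..b, V x ^ 2 ≤ ∫ x in a..b, V' x ^ 2 := by
  rw [← uIcc_of_le hab] at hV hV' hψ
  have hVc : ContinuousOn V (uIcc a b) := fun x hx => (hV x hx).continuousAt.continuousWithinAt
  have hψc : ContinuousOn ψ (uIcc a b) := fun x hx => (hψ x hx).continuousAt.continuousWithinAt
  have hF : ∀ x ∈ uIcc a b, HasDerivAt (fun x => ψ x * V x ^ 2)
      (-(lam + ψ x ^ 2) * V x ^ 2 + ψ x * (2 * V x * V' x)) x := fun x hx =>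
    ((hψ x hx).mul ((hV x hx).pow 2)).congr_deriv (by simp only [Pi.pow_apply]; ring)
  have hF_int : ∫ x in a..b, (-(lam + ψ x ^ 2) * V x ^ 2 + ψ x * (2 * V x * V' x)) = 0 := by
    rw [integral_eq_sub_of_hasDerivAt hF
      (ContinuousOn.intervalIntegrable (by fun_prop)), ha, hb]
    ring
  have hsq : 0 ≤ ∫ x in a..b, (V' x - ψ x * V x) ^ 2 :=
    integral_nonneg hab fun x _ => sq_nonneg _
  have hsplit : ∫ x in a..b, (V' x - ψ x * V x) ^ 2 = (∫ x in a..b, V' x ^ 2)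
      - lam * (∫ x in a..b, V x ^ 2)
      - ∫ x in a..b, (-(lam + ψ x ^ 2) * V x ^ 2 + ψ x * (2 * V x * V' x)) := by
    rw [← intervalIntegral.integral_const_mul, ← intervalIntegral.integral_sub,
      ← intervalIntegral.integral_sub]
    · congr 1 with x; ring
    all_goals exact ContinuousOn.intervalIntegrable (by fun_prop)
  linarith

theorem sq_mul_integral_sq_le_integral_deriv_sq_of_mul_lt_pi {a b c : ℝ} (hab : a ≤ b)
    (hc : 0 ≤ c) (hcπ : c * (b - a) < π) {V V' : ℝ → ℝ}
    (hV : ∀ x ∈ Icc a b, HasDerivAt V (V' x) x) (hV' : ContinuousOn V' (Icc a b))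
    (ha : V a = 0) (hb : V b = 0) :
    c ^ 2 * ∫ x in a..b, V x ^ 2 ≤ ∫ x in a..b, V' x ^ 2 := by
  refine mul_integral_sq_le_integral_deriv_sq_of_riccati
    (ψ := fun x => -c * tan (c * (x - (a + b) / 2))) hab hV hV'
    (fun x hx => hasDerivAt_neg_mul_tan (cos_pos_of_mem_Ioo ⟨?_, ?_⟩).ne') ha hb
  · nlinarith [hx.1, hx.2]
  · nlinarith [hx.1, hx.2]

theorem sq_pi_div_mul_integral_sq_le_integral_deriv_sq {a b : ℝ} (hab : a < b) {V V' : ℝ → ℝ}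
    (hV : ∀ x ∈ Icc a b, HasDerivAt V (V' x) x) (hV' : ContinuousOn V' (Icc a b))
    (ha : V a = 0) (hb : V b = 0) :
    (π / (b - a)) ^ 2 * ∫ x in a..b, V x ^ 2 ≤ ∫ x in a..b, V' x ^ 2 := by
  have hL : 0 < b - a := sub_pos.2 hab
  have hk : 0 < π / (b - a) := div_pos pi_pos hL
  have hlim : Tendsto (fun c => c ^ 2 * ∫ x in a..b, V x ^ 2) (𝓝[<] (π / (b - a)))
      (𝓝 ((π / (b - a)) ^ 2 * ∫ x in a..b, V x ^ 2)) :=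
    ((continuous_pow 2).mul continuous_const).continuousAt.tendsto.mono_left nhdsWithin_le_nhds
  refine le_of_tendsto hlim ?_
  filter_upwards [Ioo_mem_nhdsLT hk] with c hc
  refine sq_mul_integral_sq_le_integral_deriv_sq_of_mul_lt_pi hab.le hc.1.le ?_ hV hV' ha hb
  exact (lt_div_iff₀ hL).1 hc.2

theorem integral_sq_le_sq_div_pi_mul_integral_deriv_sq_of_integral_eq_zero {a b : ℝ} (hab : a < b)
    {v v' : ℝ → ℝ}
    (hv : ∀ x ∈ Icc a b, HasDerivAt v (v' x) x) (hv' : IntervalIntegrable v' volume a b)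
    (hv'2 : IntervalIntegrable (fun x => v' x ^ 2) volume a b)
    (hmean : ∫ x in a..b, v x = 0) :
    ∫ x in a..b, v x ^ 2 ≤ ((b - a) / π) ^ 2 * ∫ x in a..b, v' x ^ 2 := by
  set k := π / (b - a)
  have hk : 0 < k := div_pos pi_pos (sub_pos.2 hab)
  have hvc : ContinuousOn v (Icc a b) := fun x hx => (hv x hx).continuousAt.continuousWithinAt
  -- `v` extended by constants outside `[a, b]`, so that its primitive is differentiable everywhere
  set w : ℝ → ℝ := fun x => v (projIcc a b hab.le x)
  have hw : Continuous w :=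
    hvc.comp_continuous continuous_projIcc.subtype_val fun x => (projIcc a b hab.le x).2
  have hwv : EqOn w v (uIcc a b) := fun x hx => by
    rw [uIcc_of_le hab.le] at hx
    simp [w, projIcc_of_mem _ hx]
  set V : ℝ → ℝ := fun x => ∫ t in a..x, w t
  have hV : ∀ x, HasDerivAt V (w x) x := fun x => (hw.integral_hasStrictDerivAt a x).hasDerivAt
  have hVa : V a = 0 := integral_same
  have hVb : V b = 0 := (integral_congr hwv).trans hmean
  have hVc : Continuous V := continuous_iff_continuousAt.2 fun x => (hV x).continuousAt
  have hV2 : IntervalIntegrable (fun x => V x ^ 2) volume a b := (hVc.pow 2).intervalIntegrable a b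
  have hdirichlet : k ^ 2 * ∫ x in a..b, V x ^ 2 ≤ ∫ x in a..b, v x ^ 2 := by
    rw [← integral_congr fun x hx => congrArg (· ^ 2) (hwv hx)]
    exact sq_pi_div_mul_integral_sq_le_integral_deriv_sq hab (fun x _ => hV x)
      hw.continuousOn hVa hVb
  have hparts : ∫ x in a..b, -(V x * v' x) = ∫ x in a..b, v x ^ 2 := by
    rw [intervalIntegral.integral_neg, integral_mul_deriv_eq_deriv_mul (fun x _ => hV x)
      (fun x hx => hv x (uIcc_of_le hab.le ▸ hx)) (hw.intervalIntegrable a b) hv', hVa, hVb,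
      integral_congr fun x hx => show w x * v x = v x ^ 2 by rw [hwv hx, sq]]
    ring
  have hamgm : ∫ x in a..b, -(V x * v' x) ≤
      ∫ x in a..b, (k ^ 2 / 2 * V x ^ 2 + 1 / (2 * k ^ 2) * v' x ^ 2) := by
    refine integral_mono_on hab.le (hv'.continuousOn_mul hVc.continuousOn).neg
      ((hV2.const_mul _).add (hv'2.const_mul _)) fun x _ => ?_
    have := sq_nonneg (k ^ 2 * V x + v' x)
    field_simp
    nlinarith
  rw [intervalIntegral.integral_add (hV2.const_mul _) (hv'2.const_mul _),
    intervalIntegral.integral_const_mul, intervalIntegral.integral_const_mul, hparts] at hamgm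
  have hk' : ((b - a) / π) ^ 2 = 1 / k ^ 2 := by simp only [k]; field_simp
  have hhalf : 1 / (2 * k ^ 2) * ∫ x in a..b, v' x ^ 2 =
      (1 / k ^ 2 * ∫ x in a..b, v' x ^ 2) / 2 := by
    ring
  rw [hk']
  linarith

/-- Sharp Poincaré–Wirtinger inequality on an interval, with optimal constant `(b-a)/π`,
stated in squared (L²) form. -/
theorem stmt3 (a b : ℝ) (hab : a < b) (u u' : ℝ → ℝ)
    (hderiv : ∀ x ∈ Set.Icc a b, HasDerivAt u (u' x) x)
    (hu' : IntervalIntegrable u' volume a b)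
    (hu'2 : IntervalIntegrable (fun x => (u' x) ^ 2) volume a b) :
    (∫ x in a..b, (u x - (b - a)⁻¹ * ∫ y in a..b, u y) ^ 2) ≤
      ((b - a) / Real.pi) ^ 2 * ∫ x in a..b, (u' x) ^ 2 := by
  have hu : IntervalIntegrable u volume a b :=
    ContinuousOn.intervalIntegrable_of_Icc hab.le fun x hx =>
      (hderiv x hx).continuousAt.continuousWithinAt
  refine integral_sq_le_sq_div_pi_mul_integral_deriv_sq_of_integral_eq_zero hab
    (fun x hx => (hderiv x hx).sub_const _) hu' hu'2 ?_
  rw [intervalIntegral.integral_sub hu intervalIntegrable_const, intervalIntegral.integral_const,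
    smul_eq_mul, mul_inv_cancel_left₀ (sub_pos.2 hab).ne', sub_self]
end

section
/- Let V be a space of functions in H²(0,1) closed under differentiation in the sense that s ∈ V implies s' ∈ V, and suppose every s ∈ V satisfies s'(0)s(0) = s'(1)s(1). If every element t of V' := {s' : s ∈ V} satisfies the inverse inequality ‖t'‖ ≤ M‖t‖, then every s ∈ V satisfies ‖s'‖ ≤ M‖s‖, where ‖·‖ is the L²(0,1) norm. -/
/-!
Integrating by parts, the boundary condition gives `‖s'‖² = -∫ s'' s`, so by Cauchy–Schwarz and
the inverse inequality for `s' ∈ V'`, `‖s'‖⁴ ≤ ‖s''‖² ‖s‖² ≤ M² ‖s'‖² ‖s‖²`; divide by `‖s'‖²`.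
-/

open MeasureTheory intervalIntegral Set

theorem sq_integral_mul_le_integral_sq_mul_integral_sq {α : Type*} [MeasurableSpace α]
    {μ : Measure α} {f g : α → ℝ} (hf : Integrable (fun x ↦ f x ^ 2) μ)
    (hg : Integrable (fun x ↦ g x ^ 2) μ) (hfg : Integrable (fun x ↦ f x * g x) μ) :
    (∫ x, f x * g x ∂μ) ^ 2 ≤ (∫ x, f x ^ 2 ∂μ) * ∫ x, g x ^ 2 ∂μ := by
  have hquad : ∀ t : ℝ, 0 ≤ (∫ x, f x ^ 2 ∂μ) * (t * t) + 2 * (∫ x, f x * g x ∂μ) * t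
      + ∫ x, g x ^ 2 ∂μ := by
    intro t
    have hexpand : (∫ x, f x ^ 2 ∂μ) * (t * t) + 2 * (∫ x, f x * g x ∂μ) * t + ∫ x, g x ^ 2 ∂μ
        = ∫ x, (t * f x + g x) ^ 2 ∂μ := by
      have hf' := hf.const_mul (t * t)
      have hfg' := hfg.const_mul (2 * t)
      rw [show (fun x ↦ (t * f x + g x) ^ 2)
          = fun x ↦ t * t * f x ^ 2 + 2 * t * (f x * g x) + g x ^ 2 by ext; ring,
        integral_add (by exact hf'.add hfg') hg, integral_add hf' hfg',
        MeasureTheory.integral_const_mul, MeasureTheory.integral_const_mul]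
      ring
    exact hexpand ▸ integral_nonneg fun x ↦ sq_nonneg _
  have hdisc := discrim_le_zero hquad
  rw [discrim] at hdisc
  nlinarith

theorem sq_intervalIntegral_mul_le {f g : ℝ → ℝ} {a b : ℝ} (hab : a ≤ b)
    (hf : ContinuousOn f (Icc a b)) (hg : ContinuousOn g (Icc a b)) :
    (∫ x in a..b, f x * g x) ^ 2 ≤ (∫ x in a..b, f x ^ 2) * ∫ x in a..b, g x ^ 2 := by
  have hint : ∀ {u : ℝ → ℝ}, ContinuousOn u (Icc a b) → IntegrableOn u (Ioc a b) :=
    fun hu ↦ hu.integrableOn_Icc.mono_set Ioc_subset_Icc_self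
  simp only [integral_of_le hab]
  exact sq_integral_mul_le_integral_sq_mul_integral_sq (hint (hf.pow 2)) (hint (hg.pow 2))
    (hint (hf.mul hg))

theorem ContDiffOn.hasDerivAt_of_mem_Ioo {f : ℝ → ℝ} {a b x : ℝ}
    (hf : ContDiffOn ℝ 1 f (Icc a b)) (hx : x ∈ Ioo a b) : HasDerivAt f (deriv f x) x :=
  ((hf.contDiffAt (Icc_mem_nhds hx.1 hx.2)).differentiableAt one_ne_zero).hasDerivAt

theorem integral_deriv_sq_eq_sub_integral_deriv_deriv_mul {s : ℝ → ℝ} {a b : ℝ} (hab : a ≤ b)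
    (hs : ContDiffOn ℝ 1 s (Icc a b)) (hs' : ContDiffOn ℝ 1 (deriv s) (Icc a b))
    (hs'' : ContinuousOn (deriv (deriv s)) (Icc a b)) :
    ∫ x in a..b, deriv s x ^ 2
      = deriv s b * s b - deriv s a * s a - ∫ x in a..b, deriv (deriv s) x * s x := by
  simp only [sq]
  have hIoo : Ioo (min a b) (max a b) = Ioo a b := by rw [min_eq_left hab, max_eq_right hab]
  refine integral_mul_deriv_eq_deriv_mul_of_hasDerivAt ?_ ?_ ?_ ?_ ?_ ?_
  · exact uIcc_of_le hab ▸ hs'.continuousOn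
  · exact uIcc_of_le hab ▸ hs.continuousOn
  · exact hIoo ▸ fun x hx ↦ hs'.hasDerivAt_of_mem_Ioo hx
  · exact hIoo ▸ fun x hx ↦ hs.hasDerivAt_of_mem_Ioo hx
  · exact (uIcc_of_le hab ▸ hs'').intervalIntegrable
  · exact (uIcc_of_le hab ▸ hs'.continuousOn).intervalIntegrable

theorem stmt8_general (V : Set (ℝ → ℝ)) (M : ℝ)
    (hsmooth : ∀ s ∈ V, ContDiffOn ℝ 2 s (Set.Icc 0 1))
    (hclosed : ∀ s ∈ V, deriv s ∈ V)
    (hbc : ∀ s ∈ V, deriv s 0 * s 0 = deriv s 1 * s 1)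
    (hinv : ∀ t ∈ deriv '' V,
      (∫ x in (0 : ℝ)..1, (deriv t x) ^ 2) ≤ M ^ 2 * ∫ x in (0 : ℝ)..1, (t x) ^ 2) :
    ∀ s ∈ V, (∫ x in (0 : ℝ)..1, (deriv s x) ^ 2) ≤ M ^ 2 * ∫ x in (0 : ℝ)..1, (s x) ^ 2 := by
  intro s hs
  have hs' := hclosed s hs
  have hs'' := hclosed _ hs'
  have hibp := integral_deriv_sq_eq_sub_integral_deriv_deriv_mul zero_le_one
    ((hsmooth s hs).of_le one_le_two) ((hsmooth _ hs').of_le one_le_two)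
    (hsmooth _ hs'').continuousOn
  have hcs := sq_intervalIntegral_mul_le zero_le_one (hsmooth _ hs'').continuousOn
    (hsmooth s hs).continuousOn
  have hinv' := hinv _ ⟨s, hs, rfl⟩
  have hsq_nonneg : ∀ f : ℝ → ℝ, 0 ≤ ∫ x in (0 : ℝ)..1, f x ^ 2 :=
    fun f ↦ integral_nonneg zero_le_one fun x _ ↦ sq_nonneg _
  rw [hbc s hs, sub_self, zero_sub] at hibp
  rw [← neg_sq, ← hibp] at hcs
  set A := ∫ x in (0 : ℝ)..1, deriv s x ^ 2
  set B := ∫ x in (0 : ℝ)..1, s x ^ 2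
  rcases (show 0 ≤ A from hsq_nonneg _).eq_or_lt with hzero | hpos
  · rw [← hzero]
    exact mul_nonneg (sq_nonneg M) (hsq_nonneg s)
  · refine le_of_mul_le_mul_left ?_ hpos
    calc A * A = A ^ 2 := (sq A).symm
      _ ≤ (∫ x in (0 : ℝ)..1, deriv (deriv s) x ^ 2) * B := hcs
      _ ≤ M ^ 2 * A * B := mul_le_mul_of_nonneg_right hinv' (hsq_nonneg s)
      _ = A * (M ^ 2 * B) := by ring

/-- Induction step for the inverse inequality: if `V` is closed under differentiation,
every `s ∈ V` satisfies the boundary condition `s'(0)s(0) = s'(1)s(1)`, and every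
derivative `t ∈ V' = {s' : s ∈ V}` satisfies `‖t'‖ ≤ M‖t‖`, then every `s ∈ V` satisfies
`‖s'‖ ≤ M‖s‖` in `L²(0,1)` (stated in squared form). -/
theorem stmt8 (V : Set (ℝ → ℝ)) (M : ℝ) (hM : 0 ≤ M)
    (hsmooth : ∀ s ∈ V, ContDiffOn ℝ 2 s (Set.Icc 0 1))
    (hclosed : ∀ s ∈ V, deriv s ∈ V)
    (hbc : ∀ s ∈ V, deriv s 0 * s 0 = deriv s 1 * s 1)
    (hinv : ∀ t ∈ deriv '' V,
      (∫ x in (0 : ℝ)..1, (deriv t x) ^ 2) ≤ M ^ 2 * ∫ x in (0 : ℝ)..1, (t x) ^ 2) :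
    ∀ s ∈ V, (∫ x in (0 : ℝ)..1, (deriv s x) ^ 2) ≤ M ^ 2 * ∫ x in (0 : ℝ)..1, (s x) ^ 2 :=
  stmt8_general V M hsmooth hclosed hbc hinv
end

section
/- Let (τ_j) be a partition of [a,b] with subinterval lengths h_j, and let ĥ := max{2h₀, h₁, ..., h_{N−1}, 2h_N}. Let P₀ be the L²(a,b)-orthogonal projection onto the space of functions vanishing identically on the first and last subintervals and constant on each interior subinterval. Then for every u ∈ H¹(a,b) with u(a) = u(b) = 0, ‖u − P₀u‖_{L²(a,b)} ≤ (ĥ/π)‖u'‖_{L²(a,b)}. -/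
/-!
On the first and last subintervals `u` vanishes at one endpoint. There `‖u‖ ≤ (2h/π)‖u'‖`
follows from a ground-state substitution: for `ω < π/(2h)` the function
`φ x = ω tan (ω (x₀ - x))`, with `x₀` the other endpoint, solves `φ' = -ω² - φ²`, so
`0 ≤ ∫ (u' - φ u)² = ∫ u'² - ω² ∫ u²`; then let `ω → π/(2h)`.
On an interior subinterval the mean is the best constant approximation, so we may subtract
`u(m)` at the midpoint `m` instead. On each half, `u - u(m)` vanishes at an endpoint, and the
endpoint bound for length `h/2` is the Poincaré–Wirtinger constant `h/π`.
Summing the squares over the subintervals gives the estimate with `ĥ`.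
-/

open MeasureTheory intervalIntegral Set Real Filter Topology

lemma monotoneOn_Iic_of_le_succ {α : Type*} [Preorder α] {f : ℕ → α} {n : ℕ}
    (hf : ∀ j < n, f j ≤ f (j + 1)) : MonotoneOn f (Iic n) := by
  intro i _ j hj hij
  rw [mem_Iic] at hj
  induction j, hij using Nat.le_induction with
  | base => exact le_rfl
  | succ k _ ih => exact (ih (by omega)).trans (hf k (by omega))

structure HasSqIntegrableDerivOn (u u' : ℝ → ℝ) (c d : ℝ) : Prop where
  hasDerivAt : ∀ x ∈ Icc c d, HasDerivAt u (u' x) x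
  intervalIntegrable : IntervalIntegrable u' volume c d
  intervalIntegrable_sq : IntervalIntegrable (fun x => u' x ^ 2) volume c d

namespace HasSqIntegrableDerivOn

variable {u u' : ℝ → ℝ} {c d : ℝ}

lemma continuousOn (hu : HasSqIntegrableDerivOn u u' c d) : ContinuousOn u (Icc c d) :=
  fun x hx => (hu.hasDerivAt x hx).continuousAt.continuousWithinAt

lemma mono (hu : HasSqIntegrableDerivOn u u' c d) {c' d' : ℝ} (hc : c ≤ c') (hd : d' ≤ d)
    (hcd' : c' ≤ d') : HasSqIntegrableDerivOn u u' c' d' := by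
  have hsub : uIcc c' d' ⊆ uIcc c d :=
    uIcc_subset_uIcc (mem_uIcc_of_le hc (hcd'.trans hd)) (mem_uIcc_of_le (hc.trans hcd') hd)
  exact ⟨fun x hx => hu.hasDerivAt x ⟨hc.trans hx.1, hx.2.trans hd⟩,
    hu.intervalIntegrable.mono_set hsub, hu.intervalIntegrable_sq.mono_set hsub⟩

lemma sub_const (hu : HasSqIntegrableDerivOn u u' c d) (K : ℝ) :
    HasSqIntegrableDerivOn (fun x => u x - K) u' c d :=
  ⟨fun x hx => (hu.hasDerivAt x hx).sub_const K, hu.intervalIntegrable, hu.intervalIntegrable_sq⟩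

end HasSqIntegrableDerivOn

/-- Ground-state substitution: since `φ' = -ω² - φ²`, the square `(u' - φ u)²` equals
`u'² - ω² u² - (φ u²)'`, whose last term integrates to the vanishing boundary term. -/
lemma sq_mul_integral_sq_le_of_riccati {c d ω : ℝ} (hcd : c ≤ d) {u u' φ : ℝ → ℝ}
    (hu : HasSqIntegrableDerivOn u u' c d)
    (hφ : ∀ x ∈ Icc c d, HasDerivAt φ (-ω ^ 2 - φ x ^ 2) x)
    (hbdry : φ d * u d ^ 2 = φ c * u c ^ 2) :
    ω ^ 2 * ∫ x in c..d, u x ^ 2 ≤ ∫ x in c..d, u' x ^ 2 := by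
  have hI : uIcc c d = Icc c d := uIcc_of_le hcd
  have hu_cont : ContinuousOn u (uIcc c d) := hI ▸ hu.continuousOn
  have hφ_cont : ContinuousOn φ (uIcc c d) := fun x hx =>
    (hφ x (hI ▸ hx)).continuousAt.continuousWithinAt
  set dφu2 : ℝ → ℝ := fun x => (-ω ^ 2 - φ x ^ 2) * u x ^ 2 + φ x * (2 * u x) * u' x
  have hdφu2 : ∀ x ∈ uIcc c d, HasDerivAt (fun y => φ y * u y ^ 2) (dφu2 x) x := by
    intro x hx
    rw [hI] at hx
    refine ((hφ x hx).fun_mul ((hu.hasDerivAt x hx).fun_pow 2)).congr_deriv ?_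
    simp only [dφu2]
    push_cast
    ring
  have hdφu2_int : IntervalIntegrable dφu2 volume c d := by
    refine IntervalIntegrable.add ?_ (hu.intervalIntegrable.continuousOn_mul ?_)
    · exact ((continuousOn_const.sub (hφ_cont.pow 2)).mul (hu_cont.pow 2)).intervalIntegrable
    · exact hφ_cont.mul (continuousOn_const.mul hu_cont)
  have hsq_int : IntervalIntegrable (fun x => ω ^ 2 * u x ^ 2) volume c d :=
    (continuousOn_const.mul (hu_cont.pow 2)).intervalIntegrable
  have hdφu2_zero : ∫ x in c..d, dφu2 x = 0 := by
    rw [integral_eq_sub_of_hasDerivAt hdφu2 hdφu2_int, hbdry, sub_self]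
  have hpt : ∀ x ∈ uIcc c d,
      (u' x - φ x * u x) ^ 2 = u' x ^ 2 - ω ^ 2 * u x ^ 2 - dφu2 x := by
    intro x _
    simp only [dφu2]
    ring
  have hnonneg : 0 ≤ ∫ x in c..d, (u' x - φ x * u x) ^ 2 :=
    integral_nonneg hcd fun x _ => sq_nonneg _
  rw [integral_congr hpt, integral_sub (hu.intervalIntegrable_sq.sub hsq_int) hdφu2_int,
    integral_sub hu.intervalIntegrable_sq hsq_int, hdφu2_zero,
    intervalIntegral.integral_const_mul] at hnonneg
  linarith

lemma hasDerivAt_mul_tan_mul_sub {ω x₀ x : ℝ} (h : cos (ω * (x₀ - x)) ≠ 0) :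
    HasDerivAt (fun y => ω * tan (ω * (x₀ - y))) (-ω ^ 2 - (ω * tan (ω * (x₀ - x))) ^ 2) x := by
  have hinner : HasDerivAt (fun y => ω * (x₀ - y)) (-ω) x := by
    simpa using ((hasDerivAt_id x).const_sub x₀).const_mul ω
  refine (((hasDerivAt_tan h).comp x hinner).const_mul ω).congr_deriv ?_
  rw [← inv_one_add_tan_sq h]
  field_simp
  ring

lemma sq_mul_integral_sq_le_of_eq_zero {c d ω : ℝ} (hcd : c ≤ d) (hω : 0 ≤ ω)
    (hωL : ω * (d - c) < π / 2) {u u' : ℝ → ℝ} (hu : HasSqIntegrableDerivOn u u' c d)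
    (hzero : u c = 0 ∨ u d = 0) :
    ω ^ 2 * ∫ x in c..d, u x ^ 2 ≤ ∫ x in c..d, u' x ^ 2 := by
  have hcos : ∀ x₀ ∈ Icc c d, ∀ x ∈ Icc c d, cos (ω * (x₀ - x)) ≠ 0 := by
    intro x₀ hx₀ x hx
    have h₁ : ω * (x₀ - x) ≤ ω * (d - c) :=
      mul_le_mul_of_nonneg_left (by linarith [hx₀.2, hx.1]) hω
    have h₂ : ω * (x - x₀) ≤ ω * (d - c) :=
      mul_le_mul_of_nonneg_left (by linarith [hx₀.1, hx.2]) hω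
    exact (cos_pos_of_mem_Ioo ⟨by linarith, by linarith⟩).ne'
  obtain ⟨x₀, hx₀, hbdry⟩ : ∃ x₀ ∈ Icc c d,
      ω * tan (ω * (x₀ - d)) * u d ^ 2 = ω * tan (ω * (x₀ - c)) * u c ^ 2 := by
    rcases hzero with h | h
    · exact ⟨d, right_mem_Icc.2 hcd, by simp [h]⟩
    · exact ⟨c, left_mem_Icc.2 hcd, by simp [h]⟩
  exact sq_mul_integral_sq_le_of_riccati hcd hu
    (fun x hx => hasDerivAt_mul_tan_mul_sub (hcos x₀ hx₀ x hx)) hbdry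

lemma integral_sq_le_of_eq_zero {c d : ℝ} (hcd : c < d) {u u' : ℝ → ℝ}
    (hu : HasSqIntegrableDerivOn u u' c d) (hzero : u c = 0 ∨ u d = 0) :
    ∫ x in c..d, u x ^ 2 ≤ (2 * (d - c) / π) ^ 2 * ∫ x in c..d, u' x ^ 2 := by
  have hL : 0 < d - c := sub_pos.2 hcd
  set k := π / (2 * (d - c)) with hk
  have hk_pos : 0 < k := by positivity
  have hlim : k ^ 2 * ∫ x in c..d, u x ^ 2 ≤ ∫ x in c..d, u' x ^ 2 := by
    refine le_of_tendsto ?_ (eventually_of_mem (Ioo_mem_nhdsLT hk_pos) fun ω hω =>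
      sq_mul_integral_sq_le_of_eq_zero hcd.le hω.1.le ?_ hu hzero)
    · exact ((continuous_pow 2).mul continuous_const).continuousAt.tendsto.mono_left
        nhdsWithin_le_nhds
    · calc ω * (d - c) < k * (d - c) := mul_lt_mul_of_pos_right hω.2 hL
        _ = π / 2 := by rw [hk]; field_simp
  calc ∫ x in c..d, u x ^ 2 = (2 * (d - c) / π) ^ 2 * (k ^ 2 * ∫ x in c..d, u x ^ 2) := by
        rw [hk]; field_simp
    _ ≤ (2 * (d - c) / π) ^ 2 * ∫ x in c..d, u' x ^ 2 := by gcongr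

lemma integral_sq_sub_mean_le {c d : ℝ} (hcd : c < d) {f : ℝ → ℝ}
    (hf : IntervalIntegrable f volume c d) (hf2 : IntervalIntegrable (fun x => f x ^ 2) volume c d)
    (K : ℝ) :
    ∫ x in c..d, (f x - (d - c)⁻¹ * ∫ y in c..d, f y) ^ 2 ≤ ∫ x in c..d, (f x - K) ^ 2 := by
  set m := (d - c)⁻¹ * ∫ y in c..d, f y
  have hexpand : ∀ y : ℝ, ∫ x in c..d, (f x - y) ^ 2
      = (∫ x in c..d, f x ^ 2) - 2 * y * (∫ x in c..d, f x) + (d - c) * y ^ 2 := by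
    intro y
    have hpt : ∀ x, (f x - y) ^ 2 = f x ^ 2 - 2 * y * f x + y ^ 2 := fun x => by ring
    simp_rw [hpt]
    rw [integral_add (hf2.sub (hf.const_mul _)) intervalIntegrable_const,
      integral_sub hf2 (hf.const_mul _), intervalIntegral.integral_const_mul,
      intervalIntegral.integral_const, smul_eq_mul]
  have hmean : ∫ x in c..d, f x = (d - c) * m := by
    rw [mul_inv_cancel_left₀ (sub_pos.2 hcd).ne']
  rw [hexpand, hexpand, hmean]
  nlinarith [mul_nonneg (sub_pos.2 hcd).le (sq_nonneg (m - K))]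

lemma integral_sq_sub_mean_le_of_hasSqIntegrableDerivOn {c d : ℝ} (hcd : c < d)
    {u u' : ℝ → ℝ} (hu : HasSqIntegrableDerivOn u u' c d) :
    ∫ x in c..d, (u x - (d - c)⁻¹ * ∫ y in c..d, u y) ^ 2
      ≤ ((d - c) / π) ^ 2 * ∫ x in c..d, u' x ^ 2 := by
  set m := (c + d) / 2
  have hcm : c < m := by simp only [m]; linarith
  have hmd : m < d := by simp only [m]; linarith
  have hv := hu.sub_const (u m)
  have hu_cont : ContinuousOn u (uIcc c d) := uIcc_of_le hcd.le ▸ hu.continuousOn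
  have hv2_int : ∀ {c' d'}, c ≤ c' → d' ≤ d → c' ≤ d' →
      IntervalIntegrable (fun x => (u x - u m) ^ 2) volume c' d' := fun hc hd hcd' =>
    (((hu_cont.sub continuousOn_const).pow 2).mono
      (uIcc_subset_uIcc (mem_uIcc_of_le hc (hcd'.trans hd))
        (mem_uIcc_of_le (hc.trans hcd') hd))).intervalIntegrable
  calc ∫ x in c..d, (u x - (d - c)⁻¹ * ∫ y in c..d, u y) ^ 2
      ≤ ∫ x in c..d, (u x - u m) ^ 2 :=
        integral_sq_sub_mean_le hcd hu_cont.intervalIntegrable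
          (hu_cont.pow 2).intervalIntegrable (u m)
    _ = (∫ x in c..m, (u x - u m) ^ 2) + ∫ x in m..d, (u x - u m) ^ 2 :=
        (integral_add_adjacent_intervals (hv2_int le_rfl hmd.le hcm.le)
          (hv2_int hcm.le le_rfl hmd.le)).symm
    _ ≤ (2 * (m - c) / π) ^ 2 * (∫ x in c..m, u' x ^ 2)
          + (2 * (d - m) / π) ^ 2 * ∫ x in m..d, u' x ^ 2 :=
        add_le_add
          (integral_sq_le_of_eq_zero hcm (hv.mono le_rfl hmd.le hcm.le) (Or.inr (sub_self _)))
          (integral_sq_le_of_eq_zero hmd (hv.mono hcm.le le_rfl hmd.le) (Or.inl (sub_self _)))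
    _ = ((d - c) / π) ^ 2 * ∫ x in c..d, u' x ^ 2 := by
        rw [← integral_add_adjacent_intervals
          (hu.mono le_rfl hmd.le hcm.le).intervalIntegrable_sq
          (hu.mono hcm.le le_rfl hmd.le).intervalIntegrable_sq]
        simp only [m]
        ring

/-- Error estimate for the `L²`-projection `P₀` onto piecewise constants that vanish on the
first and last subintervals: `P₀u` is `0` on the first and last subintervals and the local
mean of `u` on each interior subinterval, so the squared `L²` error of `P₀` is the left-hand
side below.  Here `hhat` dominates `2h₀, h₁, …, h_{N-1}, 2h_N`. -/
theorem stmt18 (a b : ℝ) (N : ℕ) (hN : 1 ≤ N) (τ : ℕ → ℝ)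
    (hτ : ∀ j ≤ N, τ j < τ (j + 1)) (ha : τ 0 = a) (hb : τ (N + 1) = b)
    (hhat : ℝ)
    (hhhat0 : 2 * (τ 1 - τ 0) ≤ hhat) (hhhatN : 2 * (τ (N + 1) - τ N) ≤ hhat)
    (hhhatint : ∀ j, 1 ≤ j → j < N → τ (j + 1) - τ j ≤ hhat)
    (u u' : ℝ → ℝ)
    (hderiv : ∀ x ∈ Set.Icc a b, HasDerivAt u (u' x) x)
    (hu' : IntervalIntegrable u' volume a b)
    (hu'2 : IntervalIntegrable (fun x => (u' x) ^ 2) volume a b)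
    (hua : u a = 0) (hub : u b = 0) :
    ((∫ x in (τ 0)..(τ 1), (u x) ^ 2) +
        (∑ j ∈ Finset.Ico 1 N,
          ∫ x in τ j..τ (j + 1),
            (u x - (τ (j + 1) - τ j)⁻¹ * ∫ y in τ j..τ (j + 1), u y) ^ 2) +
        ∫ x in (τ N)..(τ (N + 1)), (u x) ^ 2) ≤
      (hhat / Real.pi) ^ 2 * ∫ x in a..b, (u' x) ^ 2 := by
  have hmono : MonotoneOn τ (Iic (N + 1)) :=
    monotoneOn_Iic_of_le_succ fun j hj => (hτ j (by omega)).le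
  have hu : HasSqIntegrableDerivOn u u' (τ 0) (τ (N + 1)) := ha ▸ hb ▸ ⟨hderiv, hu', hu'2⟩
  have hpiece : ∀ j ≤ N, HasSqIntegrableDerivOn u u' (τ j) (τ (j + 1)) := fun j hj =>
    hu.mono (hmono (mem_Iic.2 (by omega)) (mem_Iic.2 (by omega)) (by omega))
      (hmono (mem_Iic.2 (by omega)) (mem_Iic.2 le_rfl) (by omega)) (hτ j hj).le
  set p : ℕ → ℝ := fun j => ∫ x in τ j..τ (j + 1), u' x ^ 2
  have hscale : ∀ j ≤ N, ∀ r, 0 ≤ r → r ≤ hhat → (r / π) ^ 2 * p j ≤ (hhat / π) ^ 2 * p j := by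
    intro j hj r hr hrh
    have : 0 ≤ p j := integral_nonneg (hτ j hj).le fun x _ => sq_nonneg _
    gcongr
  have hfirst : ∫ x in (τ 0)..(τ 1), u x ^ 2 ≤ (hhat / π) ^ 2 * p 0 :=
    (integral_sq_le_of_eq_zero (hτ 0 (by omega)) (hpiece 0 (by omega))
      (Or.inl (ha ▸ hua))).trans
      (hscale 0 (by omega) _ (by linarith [hτ 0 (by omega)]) hhhat0)
  have hlast : ∫ x in (τ N)..(τ (N + 1)), u x ^ 2 ≤ (hhat / π) ^ 2 * p N :=
    (integral_sq_le_of_eq_zero (hτ N le_rfl) (hpiece N le_rfl)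
      (Or.inr (hb ▸ hub))).trans
      (hscale N le_rfl _ (by linarith [hτ N le_rfl]) hhhatN)
  have hinterior : ∀ j ∈ Finset.Ico 1 N,
      ∫ x in τ j..τ (j + 1), (u x - (τ (j + 1) - τ j)⁻¹ * ∫ y in τ j..τ (j + 1), u y) ^ 2
        ≤ (hhat / π) ^ 2 * p j := by
    intro j hj
    rw [Finset.mem_Ico] at hj
    exact (integral_sq_sub_mean_le_of_hasSqIntegrableDerivOn (hτ j (by omega))
      (hpiece j (by omega))).trans (hscale j (by omega) _
        (by linarith [hτ j (by omega)]) (hhhatint j hj.1 hj.2))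
  have hsum : p 0 + ∑ j ∈ Finset.Ico 1 N, p j + p N = ∫ x in a..b, u' x ^ 2 := by
    rw [← ha, ← hb, ← sum_integral_adjacent_intervals
      fun j hj => (hpiece j (by omega)).intervalIntegrable_sq, Finset.sum_range_succ,
      Finset.range_eq_Ico, Finset.sum_eq_sum_Ico_succ_bot (by omega : 0 < N)]
  rw [← hsum, mul_add, mul_add, Finset.mul_sum]
  exact add_le_add (add_le_add hfirst (Finset.sum_le_sum hinterior)) hlast
end
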